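/- For any a, b, c, m > 0, the function (θ,ψ) ↦ (3m³/50)·sin⁴θ cos θ sin ψ cos ψ · (a² − b²)(b² − c²)(c² − a²) · G(θ,ψ) / z(θ,ψ)⁴ vanishes identically on (0,π) × (0,2π) if and only if a = b or b = c or a = c. -/

import Mathlib

open Real

/-- The function `G(θ,ψ)` appearing in the measure obstruction for the tri-axial
rolling ellipsoid. -/
noncomputable def Gfun (a b c θ ψ : ℝ) : ℝ :=
  (2 * a ^ 2 * b ^ 2 + 3 * a ^ 2 * c ^ 2 + 3 * b ^ 2 * c ^ 2) +
    (b ^ 2 - a ^ 2) * c ^ 2 * (1 - cos (2 * θ)) * cos (2 * ψ) +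
    (-2 * a ^ 2 * b ^ 2 + a ^ 2 * c ^ 2 + b ^ 2 * c ^ 2) * cos (2 * θ)

/-- Height of the center of the ellipsoid above the plane. -/
noncomputable def zHeight (a b c θ ψ : ℝ) : ℝ :=
  Real.sqrt (a ^ 2 * sin θ ^ 2 * sin ψ ^ 2 + b ^ 2 * sin θ ^ 2 * cos ψ ^ 2 +
    c ^ 2 * cos θ ^ 2)

/-
Every factor of the obstruction other than `(a² − b²)(b² − c²)(c² − a²)` is nonzero at
`θ = ψ = π/4`: the trigonometric factors are powers of `√2/2`, the height `z` of the centre is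
positive, and since `cos (π/2) = 0` the function `G` reduces there to the positive constant
`2a²b² + 3a²c² + 3b²c²`. So the obstruction vanishes identically exactly when that product
does, i.e. when two of the (positive) semi-axes agree.
-/

lemma sq_sub_sq_prod_eq_zero_iff {a b c : ℝ} (ha : 0 ≤ a) (hb : 0 ≤ b) (hc : 0 ≤ c) :
    (a ^ 2 - b ^ 2) * (b ^ 2 - c ^ 2) * (c ^ 2 - a ^ 2) = 0 ↔ a = b ∨ b = c ∨ a = c := by
  simp only [mul_eq_zero, sub_eq_zero, sq_eq_sq₀ ha hb, sq_eq_sq₀ hb hc, sq_eq_sq₀ hc ha]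
  rw [eq_comm (a := c)]
  tauto

lemma Gfun_pi_div_four (a b c : ℝ) :
    Gfun a b c (π / 4) (π / 4) = 2 * a ^ 2 * b ^ 2 + 3 * a ^ 2 * c ^ 2 + 3 * b ^ 2 * c ^ 2 := by
  have hcos : cos (2 * (π / 4)) = 0 := by rw [← cos_pi_div_two]; ring_nf
  simp [Gfun, hcos]

lemma mul_sin_sq_add_mul_cos_sq_pos {p q : ℝ} (hp : 0 < p) (hq : 0 < q) (x : ℝ) :
    0 < p * sin x ^ 2 + q * cos x ^ 2 := by
  nlinarith [sin_sq_add_cos_sq x, mul_pos hp hq,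
    mul_nonneg (mul_nonneg hp.le hp.le) (sq_nonneg (sin x)),
    mul_nonneg (mul_nonneg hq.le hq.le) (sq_nonneg (cos x))]

lemma zHeight_pos {a b c : ℝ} (ha : 0 < a) (hb : 0 < b) (hc : 0 < c) (θ ψ : ℝ) :
    0 < zHeight a b c θ ψ := by
  have hψ := mul_sin_sq_add_mul_cos_sq_pos (pow_pos ha 2) (pow_pos hb 2) ψ
  have hθ := mul_sin_sq_add_mul_cos_sq_pos hψ (pow_pos hc 2) θ
  exact Real.sqrt_pos.mpr (by linarith)

/-- The measure obstruction
`(3m³/50)·sin⁴θ cosθ sinψ cosψ·(a²−b²)(b²−c²)(c²−a²)·G(θ,ψ)/z(θ,ψ)⁴`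
vanishes identically on `(0,π) × (0,2π)` if and only if at least two of the
semi-axes of the ellipsoid are equal. -/
theorem measure_obstruction_vanishes_iff (a b c m : ℝ) (ha : 0 < a) (hb : 0 < b)
    (hc : 0 < c) (hm : 0 < m) :
    (∀ θ ∈ Set.Ioo 0 π, ∀ ψ ∈ Set.Ioo 0 (2 * π),
        (3 * m ^ 3 / 50) * sin θ ^ 4 * cos θ * sin ψ * cos ψ *
          ((a ^ 2 - b ^ 2) * (b ^ 2 - c ^ 2) * (c ^ 2 - a ^ 2)) * Gfun a b c θ ψ /
          zHeight a b c θ ψ ^ 4 = 0) ↔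
      (a = b ∨ b = c ∨ a = c) := by
  rw [← sq_sub_sq_prod_eq_zero_iff ha.le hb.le hc.le]
  constructor
  · intro h
    have hθ : π / 4 ∈ Set.Ioo 0 π := ⟨by positivity, by linarith [pi_pos]⟩
    have hψ : π / 4 ∈ Set.Ioo 0 (2 * π) := ⟨by positivity, by linarith [pi_pos]⟩
    have key := h (π / 4) hθ (π / 4) hψ
    rw [div_eq_zero_iff, or_iff_left (pow_ne_zero _ (zHeight_pos ha hb hc _ _).ne'),
      Gfun_pi_div_four] at key
    have hG : 2 * a ^ 2 * b ^ 2 + 3 * a ^ 2 * c ^ 2 + 3 * b ^ 2 * c ^ 2 ≠ 0 := by positivity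
    have hprefactor : 3 * m ^ 3 / 50 * sin (π / 4) ^ 4 * cos (π / 4) * sin (π / 4) * cos (π / 4)
        ≠ 0 := by
      rw [sin_pi_div_four, cos_pi_div_four]; positivity
    exact (mul_eq_zero.mp ((mul_eq_zero.mp key).resolve_right hG)).resolve_left hprefactor
  · intro h θ _ ψ _
    rw [h]
    simp
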